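/- arXiv:2312.11438 — 2 statements merged into one kernel-verified Lean document; each statement's English description precedes it below -/
import Mathlib

section
/- Let f : ℝ → ℝ ∪ {+∞} be proper, convex, and lower semicontinuous with dom(f) ⊆ [0, ∞). If f is strictly decreasing on [0, b₀), then for every γ > 0 the derivative of the Moreau–Yosida regularization satisfies (ᵞf)'(θ) ≥ f'(θ) for almost every θ ∈ [0, b₀], where both derivatives exist almost everywhere. -/
open Filter Set Topology MeasureTheory

noncomputable section

/-- Convexity for extended-real-valued functions on `ℝ`. -/
def EConvex (f : ℝ → EReal) : Prop :=
  ∀ x y t : ℝ, 0 ≤ t → t ≤ 1 →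
    f (t * x + (1 - t) * y) ≤ (t : EReal) * f x + ((1 - t : ℝ) : EReal) * f y

/-- An extended-real-valued function is proper if it is not identically `+∞`
and never takes the value `−∞`. -/
def EProper (f : ℝ → EReal) : Prop := (∃ a, f a ≠ ⊤) ∧ ∀ a, f a ≠ ⊥

/-- Moreau–Yosida regularization with parameter `γ`:
`ᵞf(a) = inf_{b ≥ 0} ( f(b) + |a−b|² / (2γ) )`. -/
def moreau (γ : ℝ) (f : ℝ → EReal) (a : ℝ) : EReal :=
  ⨅ b : {b : ℝ // 0 ≤ b}, (f b.1 + (((a - b.1) ^ 2 / (2 * γ) : ℝ) : EReal))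

/-! On `(0, b₀)` the function `f` is finite and nonincreasing, and `ᵞf - f` is nondecreasing
there. Indeed, for `θ₁ < θ₂` a competitor `b₂ < θ₂` for `ᵞf(θ₂)` costs at least `f(θ₂)`, while a
competitor `b₂ ≥ θ₂` can be shifted to `b₂ - (θ₂ - θ₁)`, a competitor for `ᵞf(θ₁)` with the same
penalty, and convexity of `f` gives `f(θ₂) - f(θ₁) ≤ f(b₂) - f(b₂ - (θ₂ - θ₁))`. By Lebesgue's
theorem both monotone functions are differentiable almost everywhere, and the derivative of the
nondecreasing difference is nonnegative. That `ᵞf` is finite follows from an affine minorant of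
`f` on `[0, ∞)`, against which the quadratic penalty wins. -/

lemma ConvexOn.add_le_add_of_add_eq {s : Set ℝ} {F : ℝ → ℝ} (hF : ConvexOn ℝ s F)
    {x y a b : ℝ} (hx : x ∈ s) (hy : y ∈ s) (hxa : x ≤ a) (hay : a ≤ y) (hab : a + b = x + y) :
    F a + F b ≤ F x + F y := by
  rcases hxa.eq_or_lt with rfl | hxa
  · obtain rfl : b = y := by linarith
    rfl
  have hxy : 0 < y - x := by linarith
  set t := (y - a) / (y - x)
  have ht0 : 0 ≤ t := div_nonneg (by linarith) hxy.le
  have ht1 : 0 ≤ 1 - t := by rw [sub_nonneg, div_le_one hxy]; linarith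
  have ha := hF.2 hx hy ht0 ht1 (by ring)
  have hb := hF.2 hx hy ht1 ht0 (by ring)
  have ea : t • x + (1 - t) • y = a := by simp only [t, smul_eq_mul]; field_simp; ring
  have eb : (1 - t) • x + t • y = b := by
    rw [show b = x + y - a by linarith]; simp only [t, smul_eq_mul]; field_simp; ring
  rw [ea] at ha
  rw [eb] at hb
  simp only [smul_eq_mul] at ha hb
  linarith

lemma ConvexOn.add_slope_mul_le {s : Set ℝ} {F : ℝ → ℝ} (hF : ConvexOn ℝ s F)
    {x₁ x₂ : ℝ} (hx₁ : x₁ ∈ s) (hx₂ : x₂ ∈ s) (h₀ : 0 ≤ x₁) (h₁₂ : x₁ < x₂)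
    (hanti : ∀ b ∈ s, 0 ≤ b → b < x₂ → F x₂ ≤ F b) {b : ℝ} (hb : b ∈ s) (hb₀ : 0 ≤ b) :
    F x₂ + slope F x₁ x₂ * b ≤ F b := by
  have hslope : slope F x₁ x₂ ≤ 0 := by
    rw [slope_def_field]
    exact div_nonpos_of_nonpos_of_nonneg (by linarith [hanti x₁ hx₁ h₀ h₁₂]) (by linarith)
  rcases lt_or_ge b x₂ with hbx | hxb
  · nlinarith [hanti b hb hb₀ hbx]
  · have hsec := hF.secant_mono hx₁ hx₂ hb h₁₂.ne' (h₁₂.trans_le hxb).ne' hxb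
    rw [← slope_def_field, ← slope_def_field] at hsec
    have h₂ := sub_smul_slope F x₁ x₂
    have hb' := sub_smul_slope F x₁ b
    simp only [smul_eq_mul, vsub_eq_sub] at h₂ hb'
    nlinarith [mul_le_mul_of_nonneg_left hsec (by linarith : 0 ≤ b - x₁),
      mul_nonpos_of_nonpos_of_nonneg hslope (h₀.trans h₁₂.le)]

namespace EConvex

variable {f : ℝ → EReal}

lemma convexOn_toReal (hf : EConvex f) (hbot : ∀ x, f x ≠ ⊥) :
    ConvexOn ℝ {x | f x ≠ ⊤} fun x => (f x).toReal := by
  have key : ∀ x, f x ≠ ⊤ → ∀ y, f y ≠ ⊤ → ∀ t : ℝ, 0 ≤ t → t ≤ 1 →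
      f (t * x + (1 - t) * y) ≤ ((t * (f x).toReal + (1 - t) * (f y).toReal : ℝ) : EReal) := by
    intro x hx y hy t ht₀ ht₁
    have h := hf x y t ht₀ ht₁
    rwa [← EReal.coe_toReal hx (hbot x), ← EReal.coe_toReal hy (hbot y), ← EReal.coe_mul,
      ← EReal.coe_mul, ← EReal.coe_add] at h
  refine ⟨fun x hx y hy a b ha hb hab => ?_, fun x hx y hy a b ha hb hab => ?_⟩ <;>
    obtain rfl : b = 1 - a := by linarith
  · exact ne_top_of_le_ne_top (EReal.coe_ne_top _) (key x hx y hy a ha (by linarith))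
  · simpa only [smul_eq_mul, EReal.toReal_coe] using
      EReal.toReal_le_toReal (key x hx y hy a ha (by linarith)) (hbot _) (EReal.coe_ne_top _)

end EConvex

section Moreau

variable {γ : ℝ} {f : ℝ → EReal}

lemma moreau_le (θ : ℝ) {b : ℝ} (hb : 0 ≤ b) :
    moreau γ f θ ≤ f b + (((θ - b) ^ 2 / (2 * γ) : ℝ) : EReal) :=
  iInf_le (fun b : {b : ℝ // 0 ≤ b} => f b.1 + (((θ - b.1) ^ 2 / (2 * γ) : ℝ) : EReal)) ⟨b, hb⟩

lemma toReal_moreau_le {θ b : ℝ} (hθ : moreau γ f θ ≠ ⊥) (hb : 0 ≤ b) (hfb : f b ≠ ⊤) :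
    (moreau γ f θ).toReal ≤ (f b).toReal + (θ - b) ^ 2 / (2 * γ) := by
  have h := moreau_le (γ := γ) (f := f) θ hb
  have hfb' : f b ≠ ⊥ := fun h' => hθ (by simpa [h'] using h)
  rw [← EReal.coe_toReal hfb hfb', ← EReal.coe_add] at h
  simpa only [EReal.toReal_coe] using EReal.toReal_le_toReal h hθ (EReal.coe_ne_top _)

lemma coe_le_moreau (hbot : ∀ x, f x ≠ ⊥) {θ c : ℝ}
    (h : ∀ b, 0 ≤ b → f b ≠ ⊤ → c ≤ (f b).toReal + (θ - b) ^ 2 / (2 * γ)) :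
    (c : EReal) ≤ moreau γ f θ := by
  refine le_iInf fun ⟨b, hb⟩ => ?_
  by_cases hfb : f b = ⊤
  · simp [hfb]
  rw [← EReal.coe_toReal hfb (hbot b), ← EReal.coe_add, EReal.coe_le_coe_iff]
  exact h b hb hfb

lemma moreau_ne_bot_of_affine_le (hγ : 0 < γ) (hbot : ∀ x, f x ≠ ⊥) {c m : ℝ}
    (h : ∀ b, 0 ≤ b → f b ≠ ⊤ → c + m * b ≤ (f b).toReal) (θ : ℝ) : moreau γ f θ ≠ ⊥ := by
  refine ne_bot_of_le_ne_bot (EReal.coe_ne_bot (c + m * θ - m ^ 2 * γ / 2))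
    (coe_le_moreau hbot fun b hb hfb => ?_)
  have hsq : m * (θ - b) - m ^ 2 * γ / 2 ≤ (θ - b) ^ 2 / (2 * γ) := by
    rw [le_div_iff₀ (by positivity)]
    nlinarith [sq_nonneg (θ - b - m * γ)]
  linarith [h b hb hfb]

lemma monotoneOn_toReal_moreau_sub (hf : EConvex f) (hbot : ∀ x, f x ≠ ⊥) (hγ : 0 ≤ γ)
    {s : Set ℝ} (hs₀ : s ⊆ Ici 0) (hs : ∀ θ ∈ s, f θ ≠ ⊤)
    (hanti : ∀ θ ∈ s, ∀ b, 0 ≤ b → b < θ → f θ ≤ f b) (hne_bot : ∀ θ ∈ s, moreau γ f θ ≠ ⊥) :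
    MonotoneOn (fun θ => (moreau γ f θ).toReal - (f θ).toReal) s := by
  intro θ₁ h₁ θ₂ h₂ h₁₂
  have hF := hf.convexOn_toReal hbot
  have hg₁ : (moreau γ f θ₁).toReal ≤ (f θ₁).toReal := by
    simpa using toReal_moreau_le (hne_bot θ₁ h₁) (hs₀ h₁) (hs θ₁ h₁)
  suffices key : (((moreau γ f θ₁).toReal + (f θ₂).toReal - (f θ₁).toReal : ℝ) : EReal) ≤
      moreau γ f θ₂ by
    have := EReal.toReal_le_toReal key (EReal.coe_ne_bot _)
      (ne_top_of_le_ne_top (hs θ₂ h₂) (by simpa using moreau_le (γ := γ) (f := f) θ₂ (hs₀ h₂)))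
    simp only [EReal.toReal_coe] at this
    linarith
  refine coe_le_moreau hbot fun b₂ hb₂ hfb₂ => ?_
  have hq : 0 ≤ (θ₂ - b₂) ^ 2 / (2 * γ) := by positivity
  rcases lt_or_ge b₂ θ₂ with hb₂θ | hθb₂
  · have := EReal.toReal_le_toReal (hanti θ₂ h₂ b₂ hb₂ hb₂θ) (hbot _) hfb₂
    linarith
  · set b₁ := b₂ - θ₂ + θ₁
    have hb₁₀ : 0 ≤ b₁ := by linarith [show 0 ≤ θ₁ from hs₀ h₁]
    have hb₁ : b₁ ∈ {x | f x ≠ ⊤} :=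
      hF.1.ordConnected.out (hs θ₁ h₁) hfb₂ ⟨by linarith, by linarith⟩
    have hconv := hF.add_le_add_of_add_eq (hs θ₁ h₁) hfb₂ h₁₂ hθb₂ (show θ₂ + b₁ = θ₁ + b₂ by ring)
    have hg := toReal_moreau_le (hne_bot θ₁ h₁) hb₁₀ hb₁
    rw [show (θ₁ - b₁) ^ 2 = (θ₂ - b₂) ^ 2 by ring] at hg
    linarith

end Moreau

theorem ae_differentiableAt_and_deriv_le_of_monotoneOn_sub {F G : ℝ → ℝ} {a b : ℝ}
    (hF : AntitoneOn F (Ioo a b)) (hGF : MonotoneOn (fun x => G x - F x) (Ioo a b)) :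
    ∀ᵐ x, x ∈ Icc a b →
      DifferentiableAt ℝ F x ∧ DifferentiableAt ℝ G x ∧ deriv F x ≤ deriv G x := by
  filter_upwards [hF.neg.ae_differentiableWithinAt_of_mem, hGF.ae_differentiableWithinAt_of_mem,
    Ioo_ae_eq_Icc (a := a) (b := b)] with x hF' hGF' hIoo hx
  replace hx : x ∈ Ioo a b := hIoo.mpr hx
  have hnhds : Ioo a b ∈ 𝓝 x := Ioo_mem_nhds hx.1 hx.2
  have dF : DifferentiableAt ℝ F x := by simpa using ((hF' hx).differentiableAt hnhds).neg
  have dGF := (hGF' hx).differentiableAt hnhds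
  have dG : DifferentiableAt ℝ G x :=
    (dF.add dGF).congr_of_eventuallyEq (.of_forall fun y => (add_sub_cancel (F y) (G y)).symm)
  refine ⟨dF, dG, ?_⟩
  have := hGF.derivWithin_nonneg (x := x)
  rw [derivWithin_of_mem_nhds hnhds, deriv_fun_sub dG dF] at this
  linarith

theorem statement1_general (f : ℝ → EReal) (hproper : EProper f) (hconv : EConvex f)
    (b₀ : ℝ) (hb₀ : 0 < b₀)
    (hdec : ∀ x ∈ Set.Ico (0 : ℝ) b₀, ∀ y ∈ Set.Ico (0 : ℝ) b₀, x < y → f y < f x)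
    (γ : ℝ) (hγ : 0 < γ) :
    ∀ᵐ θ ∂(volume : Measure ℝ), θ ∈ Set.Icc (0 : ℝ) b₀ →
      DifferentiableAt ℝ (fun x => (f x).toReal) θ ∧
      DifferentiableAt ℝ (fun x => (moreau γ f x).toReal) θ ∧
      deriv (fun x => (f x).toReal) θ ≤ deriv (fun x => (moreau γ f x).toReal) θ := by
  obtain ⟨-, hbot⟩ := hproper
  have hF := hconv.convexOn_toReal hbot
  have hfin : ∀ θ ∈ Ioo 0 b₀, f θ ≠ ⊤ := fun θ hθ =>
    (hdec 0 ⟨le_rfl, hb₀⟩ θ ⟨hθ.1.le, hθ.2⟩ hθ.1).ne_top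
  have hanti : ∀ θ ∈ Ioo 0 b₀, ∀ b, 0 ≤ b → b < θ → f θ ≤ f b := fun θ hθ b hb hbθ =>
    (hdec b ⟨hb, hbθ.trans hθ.2⟩ θ ⟨hθ.1.le, hθ.2⟩ hbθ).le
  have hx₁ : b₀ / 3 ∈ Ioo 0 b₀ := ⟨by positivity, by linarith⟩
  have hx₂ : b₀ / 2 ∈ Ioo 0 b₀ := ⟨by positivity, by linarith⟩
  have hne_bot : ∀ θ, moreau γ f θ ≠ ⊥ :=
    moreau_ne_bot_of_affine_le hγ hbot fun b hb hfb =>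
      hF.add_slope_mul_le (hfin _ hx₁) (hfin _ hx₂) hx₁.1.le (by linarith)
        (fun c hc hc₀ hcx => EReal.toReal_le_toReal (hanti _ hx₂ c hc₀ hcx) (hbot _) hc) hfb hb
  refine ae_differentiableAt_and_deriv_le_of_monotoneOn_sub
    (fun x hx y hy hxy => EReal.toReal_le_toReal ?_ (hbot y) (hfin x hx))
    (monotoneOn_toReal_moreau_sub hconv hbot hγ.le (fun θ hθ => hθ.1.le) hfin hanti
      fun θ _ => hne_bot θ)
  rcases hxy.eq_or_lt with rfl | hxy
  · rfl
  · exact hanti y hy x hx.1.le hxy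

/-- If `f : ℝ → ℝ ∪ {+∞}` is proper, convex, lower semicontinuous, with
`dom f ⊆ [0, ∞)`, and strictly decreasing on `[0, b₀)`, then for every `γ > 0`,
almost everywhere on `[0, b₀]` both `f` and its Moreau–Yosida regularization `ᵞf`
are differentiable and `(ᵞf)'(θ) ≥ f'(θ)`. -/
theorem statement1 (f : ℝ → EReal) (hproper : EProper f) (hconv : EConvex f)
    (hlsc : LowerSemicontinuous f) (hdom : ∀ a : ℝ, a < 0 → f a = ⊤)
    (b₀ : ℝ) (hb₀ : 0 < b₀)
    (hdec : ∀ x ∈ Set.Ico (0 : ℝ) b₀, ∀ y ∈ Set.Ico (0 : ℝ) b₀, x < y → f y < f x)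
    (γ : ℝ) (hγ : 0 < γ) :
    ∀ᵐ θ ∂(volume : Measure ℝ), θ ∈ Set.Icc (0 : ℝ) b₀ →
      DifferentiableAt ℝ (fun x => (f x).toReal) θ ∧
      DifferentiableAt ℝ (fun x => (moreau γ f x).toReal) θ ∧
      deriv (fun x => (f x).toReal) θ ≤ deriv (fun x => (moreau γ f x).toReal) θ :=
  statement1_general f hproper hconv b₀ hb₀ hdec γ hγ
end
end

section
/- Let g : ℝ → ℝ ∪ {+∞} be proper, lower semicontinuous, and δ-convex for some δ > 0. Then its convex conjugate g* is proper, lower semicontinuous, convex, belongs to W^{2,∞}(ℝ), and its distributional second derivative satisfies 0 ≤ (g*)'' ≤ δ⁻¹. -/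
/-!
Put `h a = g a - δ a² / 2`, a proper convex function. On `ℝ` it lies above a cone
`a ↦ -A - B |a|`, so `g` grows quadratically and `g*` is finite everywhere; as a supremum of
affine functions, `g*` is convex and lower semicontinuous. Since
`a b - g a - b² / (2δ) = -(δ a - b)² / (2δ) - h a` is jointly concave in `(a, b)`, its supremum
over `a`, which is `g* b - b² / (2δ)`, is concave in `b`.
A convex `f` with `K x² / 2 - f` convex has its one-sided derivatives ordered both ways, so it is
differentiable, and `f'` and `K x - f'` are both monotone, so `f'` is `K`-Lipschitz.
-/

open Filter Set Topology

noncomputable section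

/-- Legendre–Fenchel (convex) conjugate: `g*(b) = sup_a (a·b − g(a))`. -/
def econj (f : ℝ → EReal) (b : ℝ) : EReal := ⨆ a : ℝ, ((a * b : ℝ) : EReal) - f a

lemma hasDerivAt_half_mul_sq (K x : ℝ) : HasDerivAt (fun y => K / 2 * y ^ 2) (K * x) x :=
  ((hasDerivAt_pow 2 x).const_mul (K / 2)).congr_deriv (by push_cast; ring)

namespace ConvexOn

variable {f : ℝ → ℝ} {K : ℝ}

lemma hasDerivAt_rightDeriv_of_convexOn_sq_sub (hf : ConvexOn ℝ univ f)
    (hψ : ConvexOn ℝ univ fun x => K / 2 * x ^ 2 - f x) (x : ℝ) :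
    HasDerivAt f (derivWithin f (Ioi x) x) x := by
  have hx : x ∈ interior univ := by simp
  set R := derivWithin f (Ioi x) x
  set L := derivWithin f (Iio x) x
  have hR : HasDerivWithinAt f R (Ioi x) x := hf.hasDerivWithinAt_rightDeriv_of_mem_interior hx
  have hL : HasDerivWithinAt f L (Iio x) x := hf.hasDerivWithinAt_leftDeriv_of_mem_interior hx
  have hψR : HasDerivWithinAt (fun y => K / 2 * y ^ 2 - f y) (K * x - R) (Ioi x) x :=
    (hasDerivAt_half_mul_sq K x).hasDerivWithinAt.sub hR
  have hψL : HasDerivWithinAt (fun y => K / 2 * y ^ 2 - f y) (K * x - L) (Iio x) x :=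
    (hasDerivAt_half_mul_sq K x).hasDerivWithinAt.sub hL
  have hLR : L = R := by
    refine le_antisymm (hf.leftDeriv_le_rightDeriv_of_mem_interior hx) ?_
    have h := hψ.leftDeriv_le_rightDeriv_of_mem_interior hx
    rw [hψL.derivWithin (uniqueDiffWithinAt_Iio x), hψR.derivWithin (uniqueDiffWithinAt_Ioi x)] at h
    linarith
  rw [hLR] at hL
  have := (hasDerivWithinAt_Iio_iff_Iic.mp hL).union (hasDerivWithinAt_Ioi_iff_Ici.mp hR)
  rwa [Iic_union_Ici, hasDerivWithinAt_univ] at this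

lemma differentiable_of_convexOn_sq_sub (hf : ConvexOn ℝ univ f)
    (hψ : ConvexOn ℝ univ fun x => K / 2 * x ^ 2 - f x) : Differentiable ℝ f :=
  fun x => (hf.hasDerivAt_rightDeriv_of_convexOn_sq_sub hψ x).differentiableAt

lemma lipschitzWith_deriv_of_convexOn_sq_sub (hf : ConvexOn ℝ univ f)
    (hψ : ConvexOn ℝ univ fun x => K / 2 * x ^ 2 - f x) :
    LipschitzWith (Real.toNNReal K) (deriv f) := by
  have hdf := hf.differentiable_of_convexOn_sq_sub hψ
  have hψ' : ∀ y, HasDerivAt (fun y => K / 2 * y ^ 2 - f y) (K * y - deriv f y) y :=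
    fun y => (hasDerivAt_half_mul_sq K y).sub (hdf y).hasDerivAt
  have hmono : Monotone (deriv f) := by
    simpa using hf.monotoneOn_deriv fun y _ => hdf y
  have hmono' : Monotone fun y => K * y - deriv f y := by
    intro y z hyz
    simpa only [(hψ' _).deriv] using
      hψ.monotoneOn_deriv (fun y _ => (hψ' y).differentiableAt) (mem_univ y) (mem_univ z) hyz
  have key : ∀ y z, y ≤ z → |deriv f z - deriv f y| ≤ K * |z - y| := by
    intro y z hyz
    rw [abs_of_nonneg (sub_nonneg.2 (hmono hyz)), abs_of_nonneg (sub_nonneg.2 hyz)]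
    linarith [hmono' hyz]
  refine LipschitzWith.of_dist_le_mul fun y z => ?_
  rw [Real.dist_eq, Real.dist_eq]
  refine le_trans ?_ (mul_le_mul_of_nonneg_right (Real.le_coe_toNNReal K) (abs_nonneg _))
  rcases le_total y z with hyz | hzy
  · rw [abs_sub_comm, abs_sub_comm y]
    exact key y z hyz
  · exact key z y hzy

end ConvexOn

lemma ConvexOn.exists_abs_minorant {S : Set ℝ} {H : ℝ → ℝ} (hH : ConvexOn ℝ S H) :
    ∃ A B : ℝ, ∀ a ∈ S, -A - B * |a| ≤ H a := by
  rcases S.eq_empty_or_nonempty with rfl | ⟨p, hp⟩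
  · exact ⟨0, 0, by simp⟩
  by_cases! hS : ∀ q ∈ S, q = p
  · exact ⟨-H p, 0, fun a ha => by simp [hS a ha]⟩
  obtain ⟨l, hl, u, hu, hlu⟩ : ∃ l ∈ S, ∃ u ∈ S, l < u := by
    obtain ⟨q, hq, hqp⟩ := hS
    rcases hqp.lt_or_gt with h | h
    exacts [⟨q, hq, p, hp, h⟩, ⟨p, hp, q, hq, h⟩]
  obtain ⟨m, hlm, hmu⟩ := exists_between hlu
  set σ := (H m - H l) / (m - l)
  set τ := (H u - H m) / (u - m)
  have hcone : ∀ a ∈ S, H m - (|σ| + |τ|) * |a - m| ≤ H a := by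
    intro a ha
    rcases lt_trichotomy a m with ham | rfl | hma
    · have h := hH.slope_mono_adjacent ha hu ham hmu
      rw [div_le_iff₀ (sub_pos.2 ham)] at h
      rw [abs_of_neg (sub_neg.2 ham)]
      nlinarith [le_abs_self τ, abs_nonneg σ]
    · simp
    · have h := hH.slope_mono_adjacent hl ha hlm hma
      rw [le_div_iff₀ (sub_pos.2 hma)] at h
      rw [abs_of_pos (sub_pos.2 hma)]
      nlinarith [neg_abs_le σ, abs_nonneg τ]
  refine ⟨(|σ| + |τ|) * |m| - H m, |σ| + |τ|, fun a ha => ?_⟩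
  have hB : 0 ≤ |σ| + |τ| := by positivity
  linarith [hcone a ha, mul_le_mul_of_nonneg_left (abs_sub a m) hB]

lemma EConvex.le_coe {h : ℝ → EReal} (hh : EConvex h) {x y t r s : ℝ} (ht0 : 0 ≤ t)
    (ht1 : t ≤ 1) (hx : h x = r) (hy : h y = s) :
    h (t * x + (1 - t) * y) ≤ ((t * r + (1 - t) * s : ℝ) : EReal) := by
  simpa only [hx, hy, EReal.coe_add, EReal.coe_mul] using hh x y t ht0 ht1

lemma EConvex.convexOn_toReal_s4 {h : ℝ → EReal} (hh : EConvex h) (hbot : ∀ a, h a ≠ ⊥) :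
    ConvexOn ℝ {a | h a ≠ ⊤} fun a => (h a).toReal := by
  have hcomb : ∀ x ∈ {a | h a ≠ ⊤}, ∀ y ∈ {a | h a ≠ ⊤}, ∀ t s : ℝ, 0 ≤ t → 0 ≤ s → t + s = 1 →
      h (t * x + s * y) ≤ ((t * (h x).toReal + s * (h y).toReal : ℝ) : EReal) := by
    intro x hx y hy t s ht hs hts
    obtain rfl : s = 1 - t := by linarith
    exact hh.le_coe ht (by linarith) (EReal.coe_toReal hx (hbot x)).symm
      (EReal.coe_toReal hy (hbot y)).symm
  refine ⟨fun x hx y hy t s ht hs hts => ?_, fun x hx y hy t s ht hs hts => ?_⟩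
  · exact ne_top_of_le_ne_top (EReal.coe_ne_top _) (hcomb x hx y hy t s ht hs hts)
  · have h := EReal.toReal_le_toReal (hcomb x hx y hy t s ht hs hts) (hbot _) (EReal.coe_ne_top _)
    rwa [EReal.toReal_coe] at h

lemma ConvexOn.econvex_coe {F : ℝ → ℝ} (hF : ConvexOn ℝ univ F) :
    EConvex fun b => (F b : EReal) := by
  intro x y t ht0 ht1
  have h := hF.2 (mem_univ x) (mem_univ y) ht0 (sub_nonneg.2 ht1) (add_sub_cancel t 1)
  simp only [smul_eq_mul] at h
  dsimp only
  exact_mod_cast h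

lemma le_mul_sub_sq_of_convex_comb {δ : ℝ} (hδ : 0 < δ) {a a' b b' t : ℝ} (ht0 : 0 ≤ t)
    (ht1 : t ≤ 1) :
    t * (a * b - δ / 2 * a ^ 2 - δ⁻¹ / 2 * b ^ 2)
        + (1 - t) * (a' * b' - δ / 2 * a' ^ 2 - δ⁻¹ / 2 * b' ^ 2)
      ≤ (t * a + (1 - t) * a') * (t * b + (1 - t) * b') - δ / 2 * (t * a + (1 - t) * a') ^ 2
        - δ⁻¹ / 2 * (t * b + (1 - t) * b') ^ 2 := by
  have key : (t * a + (1 - t) * a') * (t * b + (1 - t) * b') - δ / 2 * (t * a + (1 - t) * a') ^ 2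
        - δ⁻¹ / 2 * (t * b + (1 - t) * b') ^ 2
      - (t * (a * b - δ / 2 * a ^ 2 - δ⁻¹ / 2 * b ^ 2)
        + (1 - t) * (a' * b' - δ / 2 * a' ^ 2 - δ⁻¹ / 2 * b' ^ 2))
      = t * (1 - t) / (2 * δ) * (δ * (a - a') - (b - b')) ^ 2 := by
    field_simp
    ring
  have : 0 ≤ t * (1 - t) / (2 * δ) * (δ * (a - a') - (b - b')) ^ 2 := by
    have : 0 ≤ 1 - t := by linarith
    positivity
  linarith

section Conjugate

variable {g : ℝ → EReal} {f : ℝ → ℝ}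

lemma coe_sub_le_econj {a c : ℝ} (h : g a = c) (b : ℝ) :
    ((a * b - c : ℝ) : EReal) ≤ econj g b := by
  rw [EReal.coe_sub, ← h]
  exact le_iSup (fun a => ((a * b : ℝ) : EReal) - g a) a

lemma econj_le_coe (hg : ∀ a, g a ≠ ⊥) {b d : ℝ} (h : ∀ a c : ℝ, g a = c → a * b - c ≤ d) :
    econj g b ≤ d := by
  refine iSup_le fun a => ?_
  by_cases hga : g a = ⊤
  · simp [hga]
  · have hc := (EReal.coe_toReal hga (hg a)).symm
    rw [hc, ← EReal.coe_sub, EReal.coe_le_coe_iff]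
    exact h a _ hc

lemma exists_lt_of_lt_econj (hg : ∀ a, g a ≠ ⊥) {b d : ℝ} (h : (d : EReal) < econj g b) :
    ∃ a c : ℝ, g a = c ∧ d < a * b - c := by
  obtain ⟨a, ha⟩ := lt_iSup_iff.1 h
  by_cases hga : g a = ⊤
  · simp [hga] at ha
  · have hc := (EReal.coe_toReal hga (hg a)).symm
    rw [hc, ← EReal.coe_sub, EReal.coe_lt_coe_iff] at ha
    exact ⟨a, _, hc, ha⟩

lemma econj_ne_bot (hg : ∀ a, g a ≠ ⊥) (hfin : ∃ a, g a ≠ ⊤) (b : ℝ) : econj g b ≠ ⊥ := by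
  obtain ⟨a, ha⟩ := hfin
  exact ne_bot_of_le_ne_bot (EReal.coe_ne_bot (a * b - (g a).toReal))
    (coe_sub_le_econj (EReal.coe_toReal ha (hg a)).symm b)

lemma lowerSemicontinuous_econj (g : ℝ → EReal) : LowerSemicontinuous (econj g) := by
  refine lowerSemicontinuous_iSup fun a => ?_
  induction g a using EReal.rec with
  | bot =>
    simp only [EReal.sub_bot (EReal.coe_ne_bot _)]
    exact lowerSemicontinuous_const
  | coe c =>
    simp_rw [← EReal.coe_sub]
    exact (continuous_coe_real_ereal.comp (by fun_prop)).lowerSemicontinuous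
  | top =>
    simp only [EReal.sub_top]
    exact lowerSemicontinuous_const

lemma econj_le_of_quadratic_minorant {δ A B : ℝ} (hδ : 0 < δ) (hg : ∀ a, g a ≠ ⊥)
    (hmin : ∀ a c : ℝ, g a = c → δ / 2 * a ^ 2 - A - B * |a| ≤ c) (b : ℝ) :
    econj g b ≤ (((|b| + |B|) ^ 2 / (2 * δ) + A : ℝ) : EReal) := by
  refine econj_le_coe hg fun a c hc => ?_
  have hsq : |a| * (|b| + |B|) ≤ (|b| + |B|) ^ 2 / (2 * δ) + δ / 2 * |a| ^ 2 := by
    rw [div_add' _ _ _ (by positivity), le_div_iff₀ (by positivity)]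
    nlinarith [sq_nonneg (δ * |a| - (|b| + |B|))]
  have hab : a * b ≤ |a| * |b| := (le_abs_self _).trans (abs_mul a b).le
  nlinarith [hmin a c hc, sq_abs a, mul_le_mul_of_nonneg_right (le_abs_self B) (abs_nonneg a)]

lemma exists_quadratic_minorant {δ : ℝ} (hg : ∀ a, g a ≠ ⊥)
    (hconv : EConvex fun a => g a - ((δ / 2 * a ^ 2 : ℝ) : EReal)) :
    ∃ A B : ℝ, ∀ a c : ℝ, g a = c → δ / 2 * a ^ 2 - A - B * |a| ≤ c := by
  have hbot : ∀ a, g a - ((δ / 2 * a ^ 2 : ℝ) : EReal) ≠ ⊥ := fun a => by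
    rw [sub_eq_add_neg]
    exact EReal.add_ne_bot_iff.2 ⟨hg a, by rw [← EReal.coe_neg]; exact EReal.coe_ne_bot _⟩
  obtain ⟨A, B, hAB⟩ := (hconv.convexOn_toReal_s4 hbot).exists_abs_minorant
  refine ⟨A, B, fun a c hc => ?_⟩
  have hfin : g a - ((δ / 2 * a ^ 2 : ℝ) : EReal) = ((c - δ / 2 * a ^ 2 : ℝ) : EReal) := by
    rw [hc, EReal.coe_sub]
  have h := hAB a (show _ ≠ ⊤ by rw [hfin]; exact EReal.coe_ne_top _)
  rw [hfin, EReal.toReal_coe] at h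
  linarith

lemma convexOn_of_econj_eq (hg : ∀ a, g a ≠ ⊥) (hf : ∀ b, econj g b = f b) :
    ConvexOn ℝ univ f := by
  refine ⟨convex_univ, fun x _ y _ t s ht hs hts => ?_⟩
  have h : econj g (t * x + s * y) ≤ ((t * f x + s * f y : ℝ) : EReal) := by
    refine econj_le_coe hg fun a c hc => ?_
    have hx := coe_sub_le_econj hc x
    have hy := coe_sub_le_econj hc y
    rw [hf, EReal.coe_le_coe_iff] at hx hy
    calc a * (t * x + s * y) - c = t * (a * x - c) + s * (a * y - c) := by
          linear_combination c * hts
      _ ≤ t * f x + s * f y := by gcongr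
  rw [hf, EReal.coe_le_coe_iff] at h
  simpa only [smul_eq_mul] using h

lemma concaveOn_sub_sq_of_econj_eq {δ : ℝ} (hδ : 0 < δ) (hg : ∀ a, g a ≠ ⊥)
    (hconv : EConvex fun a => g a - ((δ / 2 * a ^ 2 : ℝ) : EReal)) (hf : ∀ b, econj g b = f b) :
    ConcaveOn ℝ univ fun b => f b - δ⁻¹ / 2 * b ^ 2 := by
  refine ⟨convex_univ, fun x _ y _ t s ht hs hts => ?_⟩
  obtain rfl : s = 1 - t := by linarith
  simp only [smul_eq_mul]
  have ht1 : t ≤ 1 := by linarith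
  refine le_of_forall_pos_le_add fun ε hε => ?_
  have happrox : ∀ b, ∃ a c : ℝ, g a = c ∧ f b - ε < a * b - c := fun b =>
    exists_lt_of_lt_econj hg (by rw [hf]; exact_mod_cast sub_lt_self _ hε)
  obtain ⟨ax, cx, hgx, hx⟩ := happrox x
  obtain ⟨ay, cy, hgy, hy⟩ := happrox y
  set z := t * ax + (1 - t) * ay
  have hz := hconv.le_coe ht ht1 (r := cx - δ / 2 * ax ^ 2) (s := cy - δ / 2 * ay ^ 2)
    (by rw [hgx, EReal.coe_sub]) (by rw [hgy, EReal.coe_sub])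
  obtain ⟨cz, hgz⟩ : ∃ c : ℝ, g z = c := by
    refine ⟨_, (EReal.coe_toReal (fun htop => ?_) (hg z)).symm⟩
    rw [htop, EReal.top_sub_coe, top_le_iff] at hz
    exact EReal.coe_ne_top _ hz
  rw [hgz, ← EReal.coe_sub, EReal.coe_le_coe_iff] at hz
  have hw := coe_sub_le_econj hgz (t * x + (1 - t) * y)
  rw [hf, EReal.coe_le_coe_iff] at hw
  have hφ := le_mul_sub_sq_of_convex_comb hδ (a := ax) (a' := ay) (b := x) (b' := y) ht ht1
  linarith [mul_le_mul_of_nonneg_left hx.le ht, mul_le_mul_of_nonneg_left hy.le hs]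

end Conjugate

/-- `W^{2,∞}(ℝ)` with `0 ≤ (g*)'' ≤ δ⁻¹` is encoded as: `g*` is real-valued everywhere,
differentiable with `δ⁻¹`-Lipschitz derivative, convex, and `δ⁻¹`-concave. -/
theorem statement4_general (g : ℝ → EReal) (δ : ℝ) (hδ : 0 < δ)
    (hproper : EProper g)
    (hδconv : EConvex (fun a => g a - ((δ / 2 * a ^ 2 : ℝ) : EReal))) :
    EProper (econj g) ∧
    LowerSemicontinuous (econj g) ∧
    EConvex (econj g) ∧
    (∀ b : ℝ, econj g b ≠ ⊤) ∧
    Differentiable ℝ (fun b => (econj g b).toReal) ∧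
    LipschitzWith (Real.toNNReal δ⁻¹) (deriv fun b => (econj g b).toReal) ∧
    ConvexOn ℝ Set.univ (fun b => (econj g b).toReal) ∧
    ConcaveOn ℝ Set.univ (fun b => (econj g b).toReal - δ⁻¹ / 2 * b ^ 2) := by
  obtain ⟨hfin, hg⟩ := hproper
  obtain ⟨A, B, hmin⟩ := exists_quadratic_minorant hg hδconv
  have htop : ∀ b, econj g b ≠ ⊤ := fun b =>
    ne_top_of_le_ne_top (EReal.coe_ne_top _) (econj_le_of_quadratic_minorant hδ hg hmin b)
  have hbot : ∀ b, econj g b ≠ ⊥ := econj_ne_bot hg hfin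
  set f := fun b => (econj g b).toReal
  have hf : ∀ b, econj g b = f b := fun b => (EReal.coe_toReal (htop b) (hbot b)).symm
  have hconv : ConvexOn ℝ univ f := convexOn_of_econj_eq hg hf
  have hconc := concaveOn_sub_sq_of_econj_eq hδ hg hδconv hf
  have hψ : ConvexOn ℝ univ fun b => δ⁻¹ / 2 * b ^ 2 - f b := by
    simpa only [Pi.neg_def, neg_sub] using hconc.neg
  refine ⟨⟨⟨0, htop 0⟩, hbot⟩, lowerSemicontinuous_econj g, ?_, htop,
    hconv.differentiable_of_convexOn_sq_sub hψ, hconv.lipschitzWith_deriv_of_convexOn_sq_sub hψ,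
    hconv, hconc⟩
  rw [show econj g = fun b => (f b : EReal) from funext hf]
  exact hconv.econvex_coe

/-- Let `g` be proper, lower semicontinuous, and `δ`-convex for some `δ > 0`.
Then `g*` is proper, lower semicontinuous, convex, finite everywhere, and lies in
`W^{2,∞}(ℝ)` with `0 ≤ (g*)'' ≤ δ⁻¹` (encoded as: `g*` is real-valued everywhere,
differentiable with `δ⁻¹`-Lipschitz derivative, convex, and `δ⁻¹`-concave). -/
theorem statement4 (g : ℝ → EReal) (δ : ℝ) (hδ : 0 < δ)
    (hproper : EProper g) (hlsc : LowerSemicontinuous g)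
    (hδconv : EConvex (fun a => g a - ((δ / 2 * a ^ 2 : ℝ) : EReal))) :
    EProper (econj g) ∧
    LowerSemicontinuous (econj g) ∧
    EConvex (econj g) ∧
    (∀ b : ℝ, econj g b ≠ ⊤) ∧
    Differentiable ℝ (fun b => (econj g b).toReal) ∧
    LipschitzWith (Real.toNNReal δ⁻¹) (deriv fun b => (econj g b).toReal) ∧
    ConvexOn ℝ Set.univ (fun b => (econj g b).toReal) ∧
    ConcaveOn ℝ Set.univ (fun b => (econj g b).toReal - δ⁻¹ / 2 * b ^ 2) :=
  statement4_general g δ hδ hproper hδconv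
end
end
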